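/- arXiv:1611.07102 — 2 statements merged into one kernel-verified Lean document; each statement's English description precedes it below -/
import Mathlib

section
/- Let F be a non-Marian, weakly viable consular election rule satisfying SPP and SPO. Then F satisfies veto: for every profile P and alternative a, if every voter ranks a last in P, then a ∉ F(P). -/
open Function

/-- A ballot is a strict linear order on the set of alternatives. -/
abbrev Ballot (A : Type*) := LinearOrder A

/-- A profile assigns a ballot to each voter. -/
abbrev Profile (V A : Type*) := V → Ballot A

variable {V A : Type*}

/-- The best (greatest) element of `W` under ballot `L` (junk value if `W` is empty). -/
noncomputable def bestIn [Nonempty A] (L : Ballot A) (W : Finset A) : A :=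
  if h : W.Nonempty then @Finset.max' A L W h else Classical.arbitrary A

/-- The worst (least) element of `W` under ballot `L` (junk value if `W` is empty). -/
noncomputable def worstIn [Nonempty A] (L : Ballot A) (W : Finset A) : A :=
  if h : W.Nonempty then @Finset.min' A L W h else Classical.arbitrary A

/-- Strategy-proofness for optimists. -/
def SPO [DecidableEq V] [Nonempty A] (F : Profile V A → Finset A) : Prop :=
  ∀ (P : Profile V A) (i : V) (Pi' : Ballot A),
    (P i).le (bestIn (P i) (F (Function.update P i Pi'))) (bestIn (P i) (F P))

/-- Strategy-proofness for pessimists. -/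
def SPP [DecidableEq V] [Nonempty A] (F : Profile V A → Finset A) : Prop :=
  ∀ (P : Profile V A) (i : V) (Pi' : Ballot A),
    (P i).le (worstIn (P i) (F (Function.update P i Pi'))) (worstIn (P i) (F P))

/-- `F` is weakly viable if every alternative is on some winning committee. -/
def WeaklyViable (F : Profile V A → Finset A) : Prop :=
  ∀ a : A, ∃ P : Profile V A, a ∈ F P

/-- `F` is Marian if some alternative is on every winning committee. -/
def Marian (F : Profile V A → Finset A) : Prop :=
  ∃ m : A, ∀ P : Profile V A, m ∈ F P

/-- restriction of a ballot to a subset of alternatives -/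
def restrictBallot (L : Ballot A) (B : Finset A) : Ballot {x // x ∈ B} :=
  @LinearOrder.lift' _ A L (fun x => (x : A)) Subtype.val_injective

/-- A consular rule is reducible if it is the disjoint union of two social choice functions. -/
def Reducible [Fintype A] [DecidableEq A] (F : Profile V A → Finset A) : Prop :=
  ∃ B C : Finset A, B.Nonempty ∧ C.Nonempty ∧ Disjoint B C ∧ B ∪ C = Finset.univ ∧
    ∃ (G : Profile V {x // x ∈ B} → {x // x ∈ B}) (H : Profile V {x // x ∈ C} → {x // x ∈ C}),
      ∀ P : Profile V A,
        F P = {((G (fun i => restrictBallot (P i) B)) : A), ((H (fun i => restrictBallot (P i) C)) : A)}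

/-- The range graph of a consular election rule. -/
def rangeGraph [DecidableEq A] (F : Profile V A → Finset A) : SimpleGraph A where
  Adj a b := a ≠ b ∧ ∃ P : Profile V A, F P = {a, b}
  symm := by
    refine ⟨?_⟩
    rintro a b ⟨hab, P, hP⟩
    exact ⟨hab.symm, P, by rwa [Finset.pair_comm]⟩
  loopless := by refine ⟨?_⟩; rintro a ⟨h, -⟩; exact h rfl

/-- `t` is ranked immediately above `s` in ballot `L`. -/
def JustAbove (L : Ballot A) (s t : A) : Prop :=
  L.lt s t ∧ ∀ z, ¬ (L.lt s z ∧ L.lt z t)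

/-- The ballot obtained from `L` by transposing the alternatives `s` and `t`. -/
def swapBallot [DecidableEq A] (L : Ballot A) (s t : A) : Ballot A :=
  @LinearOrder.lift' A A L (Equiv.swap s t) (Equiv.injective _)

/-- `L'` is obtained from `L` by moving `s` up. -/
def MovedUp (L L' : Ballot A) (s : A) : Prop :=
  (∀ x y, x ≠ s → y ≠ s → (L'.lt x y ↔ L.lt x y)) ∧ ∀ x, L.lt x s → L'.lt x s

/-- `L'` is obtained from `L` by moving `s` down. -/
def MovedDown (L L' : Ballot A) (s : A) : Prop :=
  (∀ x y, x ≠ s → y ≠ s → (L'.lt x y ↔ L.lt x y)) ∧ ∀ x, L.lt s x → L'.lt s x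

/-- Strategy-proofness of a single-winner social choice function. -/
def SCFStrategyProof {B : Type*} [DecidableEq V] (G : Profile V B → B) : Prop :=
  ∀ (Q : Profile V B) (i : V) (Qi' : Ballot B),
    (Q i).le (G (Function.update Q i Qi')) (G Q)

/-- Edge-connectivity of a graph. -/
def EdgeConnectivity {X : Type*} (G : SimpleGraph X) : Prop :=
  ∀ a b c d : X, G.Adj a b → G.Adj c d → a ≠ c → a ≠ d → b ≠ c → b ≠ d →
    (G.Adj a c ∨ G.Adj a d) ∧ (G.Adj b c ∨ G.Adj b d)


/-- a non-Marian, weakly viable consular election rule satisfying SPP and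
SPO satisfies veto. -/
theorem statement_6 {V A : Type*} [Fintype V] [Nonempty V] [DecidableEq V] [Fintype A] [DecidableEq A] [Nonempty A]
    (F : Profile V A → Finset A) (hcomm : ∀ P, (F P).card = 2)
    (hnonMarian : ¬ Marian F)
    (hviable : WeaklyViable F) (hSPP : SPP F) (hSPO : SPO F) :
    ∀ (P : Profile V A) (a : A), (∀ i : V, ∀ x : A, (P i).le a x) → a ∉ F P := by
  intro P a hbot haF
  apply hnonMarian
  refine ⟨a, ?_⟩
  -- One-step lemma: if `a` is bottom of voter `i`'s ballot and `a ∈ F R`, then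
  -- `a` remains chosen after any unilateral deviation by `i` (by SPP).
  have step : ∀ (R : Profile V A) (i : V) (Ri' : Ballot A),
      a ∈ F R → (∀ x, (R i).le a x) → a ∈ F (Function.update R i Ri') := by
    intro R i Ri' haR hb
    have hne : (F R).Nonempty := Finset.card_pos.mp (by rw [hcomm]; norm_num)
    have hne' : (F (Function.update R i Ri')).Nonempty :=
      Finset.card_pos.mp (by rw [hcomm]; norm_num)
    have hs := hSPP R i Ri'
    letI : LinearOrder A := R i
    have e1 : worstIn (R i) (F R) = a := by
      unfold worstIn
      rw [dif_pos hne]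
      exact le_antisymm (Finset.min'_le _ _ haR) (hb _)
    have hmem : worstIn (R i) (F (Function.update R i Ri')) ∈ F (Function.update R i Ri') := by
      unfold worstIn
      rw [dif_pos hne']
      exact Finset.min'_mem _ _
    have heq : worstIn (R i) (F (Function.update R i Ri')) = a := by
      rw [e1] at hs
      exact le_antisymm hs (hb _)
    rwa [heq] at hmem
  -- Induction: change voters one at a time.
  have key : ∀ s : Finset V, ∀ Q : Profile V A, (∀ i, i ∉ s → Q i = P i) → a ∈ F Q := by
    intro s
    induction s using Finset.induction_on with
    | empty =>
        intro Q hQ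
        have : Q = P := funext fun i => hQ i (by simp)
        rwa [this]
    | @insert j s hj ih =>
        intro Q hQ
        set Q' := Function.update Q j (P j) with hQ'def
        have hQ' : ∀ i, i ∉ s → Q' i = P i := by
          intro i hi
          by_cases h : i = j
          · subst h; simp [Q']
          · rw [hQ'def, Function.update_of_ne h]
            exact hQ i (by simp [h, hi])
        have h1 : a ∈ F Q' := ih Q' hQ'
        have h2 := step Q' j (Q j) h1 (by rw [hQ'def, Function.update_self]; exact hbot j)
        have hQe : Function.update Q' j (Q j) = Q := by
          funext i
          by_cases h : i = j
          · subst h; simp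
          · simp [Function.update_of_ne h, Q']
        rwa [hQe] at h2
  exact fun Q => key Finset.univ Q (fun i hi => absurd (Finset.mem_univ i) hi)
end

section
/- Let G be a simple graph on a finite vertex set A that satisfies edge-connectivity and has at least one edge, and let P_i be a strict linear order on A. Then there is a unique edge {a, b} of G that is maximal among the edges of G under both the optimistic order ⪰_i^O and the pessimistic order ⪰_i^P induced by P_i. -/
open Function

variable {V A : Type*}

/-- in an edge-connected graph with at least one edge, every linear order
on the vertices admits a unique edge maximal under both the optimistic and pessimistic
orders. -/
theorem statement_14 {A : Type*} [Fintype A] [DecidableEq A] [Nonempty A]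
    (G : SimpleGraph A) (hEC : EdgeConnectivity G)
    (hedge : ∃ a b : A, G.Adj a b)
    (L : Ballot A) :
    ∃! W : Finset A,
      (∃ a b : A, G.Adj a b ∧ W = {a, b}) ∧
      (∀ W' : Finset A, (∃ a b : A, G.Adj a b ∧ W' = {a, b}) →
        ¬ L.lt (bestIn L W) (bestIn L W')) ∧
      (∀ W' : Finset A, (∃ a b : A, G.Adj a b ∧ W' = {a, b}) →
        ¬ L.lt (worstIn L W) (worstIn L W')) := by
  classical
  letI := L
  set E : Finset A → Prop := fun W => ∃ a b : A, G.Adj a b ∧ W = {a, b} with hE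
  have hbest_mem : ∀ W : Finset A, W.Nonempty → bestIn L W ∈ W := by
    intro W hW; rw [bestIn, dif_pos hW]; exact Finset.max'_mem _ hW
  have hbest_le : ∀ (W : Finset A), W.Nonempty → ∀ x ∈ W, x ≤ bestIn L W := by
    intro W hW x hx; rw [bestIn, dif_pos hW]; exact Finset.le_max' _ _ hx
  have hworst_mem : ∀ W : Finset A, W.Nonempty → worstIn L W ∈ W := by
    intro W hW; rw [worstIn, dif_pos hW]; exact Finset.min'_mem _ hW
  have hworst_le : ∀ (W : Finset A), W.Nonempty → ∀ x ∈ W, worstIn L W ≤ x := by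
    intro W hW x hx; rw [worstIn, dif_pos hW]; exact Finset.min'_le _ _ hx
  have hpairne : ∀ a b : A, ({a, b} : Finset A).Nonempty := fun a b => ⟨a, by simp⟩
  have edge_facts : ∀ W : Finset A, E W →
      G.Adj (bestIn L W) (worstIn L W) ∧ W = {bestIn L W, worstIn L W} := by
    rintro W ⟨a, b, hab, rfl⟩
    have hne : a ≠ b := hab.ne
    have hWne := hpairne a b
    have hb := hbest_mem _ hWne
    have hw := hworst_mem _ hWne
    have hab' : b ≤ bestIn L {a, b} := hbest_le _ hWne b (by simp)
    have haa' : a ≤ bestIn L {a, b} := hbest_le _ hWne a (by simp)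
    have hwb' : worstIn L {a, b} ≤ b := hworst_le _ hWne b (by simp)
    have hwa' : worstIn L {a, b} ≤ a := hworst_le _ hWne a (by simp)
    simp only [Finset.mem_insert, Finset.mem_singleton] at hb hw
    rcases hb with h1 | h1 <;> rcases hw with h2 | h2 <;> rw [h1, h2]
    · exact absurd (le_antisymm (h1 ▸ hab') (h2 ▸ hwb')) (Ne.symm hne)
    · exact ⟨hab, rfl⟩
    · exact ⟨hab.symm, by rw [Finset.pair_comm]⟩
    · rw [h1] at haa'; rw [h2] at hwa'; exact absurd (le_antisymm haa' hwa') hne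
  have edge_ne : ∀ W : Finset A, E W → W.Nonempty := by
    rintro W ⟨a, b, hab, rfl⟩; exact hpairne a b
  -- the lexicographic objective
  set f : Finset A → A ×ₗ A := fun W => toLex (bestIn L W, worstIn L W) with hf
  set S : Finset (Finset A) := Finset.univ.filter E with hS
  have hSmem : ∀ W : Finset A, W ∈ S ↔ E W := by
    intro W; simp [hS]
  obtain ⟨a0, b0, hab0⟩ := hedge
  have hSne : S.Nonempty := ⟨{a0, b0}, (hSmem _).2 ⟨a0, b0, hab0, rfl⟩⟩
  obtain ⟨W, hWS, hWmax⟩ := S.exists_max_image f hSne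
  have hEW : E W := (hSmem W).1 hWS
  -- helper: an edge {a, x} with x < a has best a and worst x
  have pair_calc : ∀ a x : A, x < a →
      bestIn L {a, x} = a ∧ worstIn L {a, x} = x := by
    intro a x hxa
    have hne := hpairne a x
    have hb := hbest_mem _ hne
    have hw := hworst_mem _ hne
    simp only [Finset.mem_insert, Finset.mem_singleton] at hb hw
    constructor
    · rcases hb with h | h
      · exact h
      · exact absurd ((hbest_le _ hne a (by simp)).trans_eq h) (not_le_of_gt hxa)
    · rcases hw with h | h
      · exfalso
        have hw2 := hworst_le _ hne x (by simp)
        rw [h] at hw2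
        exact absurd hw2 (not_le_of_gt hxa)
      · exact h
  refine ⟨W, ⟨hEW, ?_, ?_⟩, ?_⟩
  · -- optimistic maximality
    intro W' hEW' hlt
    have hle := hWmax W' ((hSmem W').2 hEW')
    have : f W < f W' := by
      rw [hf]
      exact Prod.Lex.lt_iff.2 (Or.inl hlt)
    exact absurd hle (not_le_of_gt this)
  · -- pessimistic maximality
    intro W' hEW' hlt
    have hle := hWmax W' ((hSmem W').2 hEW')
    rw [hf, Prod.Lex.le_iff] at hle
    rcases hle with hcase | ⟨heq, hle2⟩
    · -- best W' < best W: use edge-connectivity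
      obtain ⟨hadjW, hWeq⟩ := edge_facts W hEW
      obtain ⟨hadjW', hW'eq⟩ := edge_facts W' hEW'
      set a := bestIn L W
      set b := worstIn L W
      set c := bestIn L W'
      set d := worstIn L W'
      have hdc : d ≤ c := hworst_le W' (edge_ne W' hEW') c (hW'eq ▸ by simp)
      -- b < d, d ≤ c, c < a
      have hca : c < a := hcase
      have hbd : b < d := hlt
      have h1 : a ≠ c := (ne_of_gt hca)
      have h2 : a ≠ d := ne_of_gt (lt_of_le_of_lt hdc hca)
      have h3 : b ≠ c := ne_of_lt (lt_of_lt_of_le hbd hdc)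
      have h4 : b ≠ d := ne_of_lt hbd
      obtain ⟨hax, _⟩ := hEC a b c d hadjW hadjW' h1 h2 h3 h4
      -- in either case get an edge {a, x} with d ≤ x, x < a
      obtain ⟨x, hadjx, hdx, hxa⟩ : ∃ x : A, G.Adj a x ∧ d ≤ x ∧ x < a := by
        rcases hax with h | h
        · exact ⟨c, h, hdc, hca⟩
        · exact ⟨d, h, le_refl d, lt_of_le_of_lt hdc hca⟩
      have hEX : E ({a, x} : Finset A) := ⟨a, x, hadjx, rfl⟩
      have hle' := hWmax _ ((hSmem _).2 hEX)
      obtain ⟨hbX, hwX⟩ := pair_calc a x hxa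
      rw [hf, Prod.Lex.le_iff] at hle'
      simp only [hbX, hwX] at hle'
      rcases hle' with h | ⟨_, h⟩
      · exact absurd h (not_lt_of_ge (le_refl a)).elim
      · exact absurd (lt_of_lt_of_le (lt_of_lt_of_le hbd hdx) h) (lt_irrefl b)
    · exact absurd (lt_of_lt_of_le hlt hle2) (lt_irrefl _)
  · -- uniqueness
    rintro W' ⟨hEW', hopt', hpess'⟩
    -- W also satisfies maximality (shown above, but re-derive from lex max)
    have hoptW : ∀ W'' : Finset A, E W'' → ¬ bestIn L W < bestIn L W'' := by
      intro W'' hE'' hlt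
      have hle := hWmax W'' ((hSmem W'').2 hE'')
      exact absurd hle (not_le_of_gt (Prod.Lex.lt_iff.2 (Or.inl hlt)))
    have hbesteq : bestIn L W' = bestIn L W :=
      le_antisymm (not_lt.1 (hoptW W' hEW')) (not_lt.1 (hopt' W hEW))
    have hworsteq : worstIn L W' = worstIn L W := by
      refine le_antisymm ?_ (not_lt.1 (hpess' W hEW))
      by_contra h
      push_neg at h
      -- worst W < worst W' : contradiction with lex maximality as above
      have hle := hWmax W' ((hSmem W').2 hEW')
      rw [hf, Prod.Lex.le_iff] at hle
      rcases hle with hcase | ⟨_, hle2⟩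
      · change bestIn L W' < bestIn L W at hcase; rw [hbesteq] at hcase; exact absurd hcase (lt_irrefl _)
      · exact absurd (lt_of_lt_of_le h hle2) (lt_irrefl _)
    obtain ⟨_, hWeq⟩ := edge_facts W hEW
    obtain ⟨_, hW'eq⟩ := edge_facts W' hEW'
    rw [hW'eq, hWeq, hbesteq, hworsteq]
end
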